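/- For every positive integer k and z ∈ ℂ with 0 < |z| < 1, the function h_k(z) := ((z−1)/z)^k log(1/(1−z)) + Σ_{m=1}^{k} (1/m) ((z−1)/z)^{k−m} has the convergent power series expansion h_k(z) = Σ_{n=1}^{∞} ( k! / ( n(n+1)⋯(n+k) ) ) z^n. In particular h_k extends continuously to { |z| ≤ 1 } with h_k(1) = 1/k and h_k(0) = 0, and the functions satisfy the recurrence h_k(z) − h_k(z)/z = −1/(k+1) + h_{k+1}(z), with the convention h_0(z) = log(1/(1−z)). -/

import Mathlib

noncomputable section
open scoped BigOperators

/-- `h_k(z) = ((z-1)/z)^k log(1/(1-z)) + Σ_{m=1}^k (1/m) ((z-1)/z)^{k-m}`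
(for `k = 0` this is `log(1/(1-z))` since the sum is empty). -/
def hke (k : ℕ) (z : ℂ) : ℂ :=
  ((z - 1) / z) ^ k * Complex.log (1 / (1 - z)) +
    ∑ m ∈ Finset.Icc 1 k, (1 / (m : ℂ)) * ((z - 1) / z) ^ (k - m)

/-- The coefficient `k! / (n (n+1) ⋯ (n+k))`. -/
def hkeCoef (k n : ℕ) : ℝ :=
  (Nat.factorial k : ℝ) / ∏ j ∈ Finset.range (k + 1), ((n : ℝ) + (j : ℝ))

/-!
The coefficients `c_k(n) = k! / (n(n+1)⋯(n+k))` satisfy `c_{k+1}(n) = c_k(n) - c_k(n+1)`, while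
`h_{k+1}(z) = h_k(z) - h_k(z)/z + 1/(k+1)`. Starting from `h_0(z) = log(1/(1-z)) = Σ z^n/n`,
subtracting the shifted series `h_k(z)/z` from `h_k(z)` therefore produces the series of `h_{k+1}`.
For `k ≥ 1` the coefficients are positive and telescope to `c_{k-1}(1) = 1/k`, so the series
converges absolutely and uniformly on the closed unit disc, which gives the continuous extension.
-/

open Filter Topology
open scoped Nat

lemma hkeCoef_eq_div_ascFactorial (k n : ℕ) :
    hkeCoef k n = k ! / (n.ascFactorial (k + 1) : ℝ) := by
  rw [hkeCoef, Nat.ascFactorial_eq_prod_range]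
  push_cast
  rfl

lemma hkeCoef_zero_left (n : ℕ) : hkeCoef 0 n = 1 / n := by
  simp [hkeCoef_eq_div_ascFactorial, Nat.ascFactorial]

lemma hkeCoef_one_right (k : ℕ) : hkeCoef k 1 = 1 / (k + 1) := by
  rw [hkeCoef_eq_div_ascFactorial, Nat.one_ascFactorial, Nat.factorial_succ]
  push_cast
  field_simp

lemma hkeCoef_nonneg (k n : ℕ) : 0 ≤ hkeCoef k n := by
  rw [hkeCoef_eq_div_ascFactorial]
  positivity

lemma hkeCoef_le (k n : ℕ) : hkeCoef k n ≤ k ! / n := by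
  rcases n.eq_zero_or_pos with rfl | hn
  · simp [hkeCoef_eq_div_ascFactorial, Nat.zero_ascFactorial]
  rw [hkeCoef_eq_div_ascFactorial]
  have : n ≤ n.ascFactorial (k + 1) :=
    (Nat.le_self_pow k.succ_ne_zero n).trans (Nat.pow_succ_le_ascFactorial n (k + 1))
  gcongr

lemma hkeCoef_succ_left (k : ℕ) {n : ℕ} (hn : 0 < n) :
    hkeCoef (k + 1) n = hkeCoef k n - hkeCoef k (n + 1) := by
  have hA : (0 : ℝ) < n.ascFactorial (k + 1) := by
    obtain ⟨m, rfl⟩ := Nat.exists_eq_add_of_lt hn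
    exact_mod_cast Nat.ascFactorial_pos _ _
  have hshift : (n : ℝ) * (n + 1).ascFactorial (k + 1) = (n + k + 1) * n.ascFactorial (k + 1) := by
    exact_mod_cast Nat.succ_ascFactorial n (k + 1)
  have hB : ((n + 1).ascFactorial (k + 1) : ℝ) ≠ 0 := by positivity
  simp only [hkeCoef_eq_div_ascFactorial, Nat.ascFactorial_succ (k := k + 1), Nat.factorial_succ]
  push_cast
  field_simp
  linear_combination -hshift

lemma tendsto_hkeCoef_atTop (k : ℕ) : Tendsto (hkeCoef k) atTop (𝓝 0) :=
  squeeze_zero (hkeCoef_nonneg k) (hkeCoef_le k) (tendsto_const_div_atTop_nhds_zero_nat _)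

lemma hasSum_sub_succ_of_antitone {f : ℕ → ℝ} {l : ℝ} (hf : Antitone f)
    (hl : Tendsto f atTop (𝓝 l)) : HasSum (fun n ↦ f n - f (n + 1)) (f 0 - l) := by
  rw [hasSum_iff_tendsto_nat_of_nonneg fun n ↦ sub_nonneg.2 (hf n.le_succ)]
  simpa only [Finset.sum_range_sub'] using tendsto_const_nhds.sub hl

lemma hasSum_hkeCoef (k : ℕ) : HasSum (fun n ↦ hkeCoef (k + 1) (n + 1)) (1 / (k + 1)) := by
  have hanti : Antitone fun n ↦ hkeCoef k (n + 1) := antitone_nat_of_succ_le fun n ↦ by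
    rw [← sub_nonneg, ← hkeCoef_succ_left k n.succ_pos]
    exact hkeCoef_nonneg _ _
  have h := hasSum_sub_succ_of_antitone hanti
    ((tendsto_hkeCoef_atTop k).comp (tendsto_add_atTop_nat 1))
  rw [zero_add, hkeCoef_one_right, sub_zero] at h
  exact h.congr_fun fun n ↦ hkeCoef_succ_left k n.succ_pos

lemma hke_succ (k : ℕ) (z : ℂ) :
    hke (k + 1) z = (z - 1) / z * hke k z + 1 / (k + 1) := by
  rw [hke, hke, Finset.sum_Icc_succ_top (by omega : 1 ≤ k + 1), Nat.sub_self, pow_zero,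
    mul_add, Finset.mul_sum, pow_succ']
  have hsum : ∑ m ∈ Finset.Icc 1 k, 1 / (m : ℂ) * ((z - 1) / z) ^ (k + 1 - m) =
      ∑ m ∈ Finset.Icc 1 k, (z - 1) / z * (1 / (m : ℂ) * ((z - 1) / z) ^ (k - m)) :=
    Finset.sum_congr rfl fun m hm ↦ by
      rw [Nat.sub_add_comm (Finset.mem_Icc.1 hm).2, pow_succ']
      ring
  rw [hsum]
  push_cast
  ring

lemma HasSum.sub_mul_pow_succ {𝕜 : Type*} [NormedField 𝕜] {a : ℕ → 𝕜} {s z : 𝕜} (hz : z ≠ 0)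
    (h : HasSum (fun n ↦ a n * z ^ (n + 1)) s) :
    HasSum (fun n ↦ (a n - a (n + 1)) * z ^ (n + 1)) (s - (s - a 0 * z) / z) := by
  have htail : HasSum (fun n ↦ a (n + 1) * z ^ (n + 1 + 1)) (s - a 0 * z) := by
    simpa using (hasSum_nat_add_iff' 1).2 h
  have hdiv : HasSum (fun n ↦ a (n + 1) * z ^ (n + 1)) ((s - a 0 * z) / z) := by
    convert htail.div_const z using 2 with n
    rw [eq_div_iff hz]
    ring
  simpa only [sub_mul] using h.sub hdiv

lemma hasSum_hke_zero {z : ℂ} (hz : ‖z‖ < 1) :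
    HasSum (fun n ↦ (hkeCoef 0 (n + 1) : ℂ) * z ^ (n + 1)) (hke 0 z) := by
  have hlog : Complex.log (1 - z)⁻¹ = -Complex.log (1 - z) := by
    refine Complex.log_inv _ (Complex.slitPlane_arg_ne_pi ?_)
    simpa [sub_eq_add_neg] using Complex.mem_slitPlane_of_norm_lt_one (norm_neg z ▸ hz)
  convert Complex.hasSum_taylorSeries_neg_log' hz using 1
  · ext n
    rw [hkeCoef_zero_left]
    push_cast
    ring
  · simp [hke, hlog]

lemma hasSum_hke (k : ℕ) {z : ℂ} (hz₀ : z ≠ 0) (hz : ‖z‖ < 1) :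
    HasSum (fun n ↦ (hkeCoef k (n + 1) : ℂ) * z ^ (n + 1)) (hke k z) := by
  induction k with
  | zero => exact hasSum_hke_zero hz
  | succ k ih =>
    have hval : hke k z - (hke k z - (hkeCoef k (0 + 1) : ℂ) * z) / z = hke (k + 1) z := by
      rw [hke_succ, zero_add, hkeCoef_one_right]
      push_cast
      field_simp
      ring
    refine hval ▸ (ih.sub_mul_pow_succ hz₀).congr_fun fun n ↦ ?_
    rw [hkeCoef_succ_left k n.succ_pos]
    push_cast
    ring

lemma continuousOn_tsum_mul_pow_succ {a : ℕ → ℂ} (ha : Summable fun n ↦ ‖a n‖) :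
    ContinuousOn (fun z : ℂ ↦ ∑' n, a n * z ^ (n + 1)) {z | ‖z‖ ≤ 1} := by
  refine continuousOn_tsum (fun n ↦ by fun_prop) ha fun n z (hz : ‖z‖ ≤ 1) ↦ ?_
  rw [norm_mul, norm_pow]
  exact mul_le_of_le_one_right (norm_nonneg _) (pow_le_one₀ (norm_nonneg _) hz)

/-- For every positive integer `k` and `0 < |z| < 1`, the function `h_k` has the convergent
power series expansion `h_k(z) = Σ_{n ≥ 1} (k! / (n(n+1)⋯(n+k))) z^n`; in particular `h_k`
extends continuously to the closed unit disc with `h_k(1) = 1/k` and `h_k(0) = 0`; and the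
functions satisfy the recurrence `h_k(z) - h_k(z)/z = -1/(k+1) + h_{k+1}(z)` (with the
convention `h_0(z) = log(1/(1-z))`, which holds by definition of `hke`). -/
theorem hke_expansion :
    (∀ z : ℂ, 0 < ‖z‖ → ‖z‖ < 1 →
      hke 0 z = Complex.log (1 / (1 - z))) ∧
    (∀ k : ℕ, 1 ≤ k →
      (∀ z : ℂ, 0 < ‖z‖ → ‖z‖ < 1 →
        HasSum (fun n : ℕ => ((hkeCoef k (n + 1) : ℝ) : ℂ) * z ^ (n + 1)) (hke k z)) ∧
      (∃ H : ℂ → ℂ, ContinuousOn H {z : ℂ | ‖z‖ ≤ 1} ∧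
        (∀ z : ℂ, 0 < ‖z‖ → ‖z‖ < 1 → H z = hke k z) ∧
        H 1 = 1 / (k : ℂ) ∧ H 0 = 0)) ∧
    (∀ k : ℕ, ∀ z : ℂ, 0 < ‖z‖ → ‖z‖ < 1 →
      hke k z - hke k z / z = -(1 / ((k : ℂ) + 1)) + hke (k + 1) z) := by
  refine ⟨fun z _ _ ↦ by simp [hke], fun k hk ↦ ?_, fun k z hz₀ _ ↦ ?_⟩
  · have hseries (z : ℂ) (hz₀ : 0 < ‖z‖) (hz : ‖z‖ < 1) := hasSum_hke k (norm_pos_iff.1 hz₀) hz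
    obtain ⟨j, rfl⟩ := Nat.exists_eq_add_of_le' hk
    have hcoef := Complex.hasSum_ofReal.2 (hasSum_hkeCoef j)
    refine ⟨hseries, fun z ↦ ∑' n, (hkeCoef (j + 1) (n + 1) : ℂ) * z ^ (n + 1),
      continuousOn_tsum_mul_pow_succ ?_, fun z hz₀ hz ↦ (hseries z hz₀ hz).tsum_eq, ?_, by simp⟩
    · simpa [Complex.norm_real, abs_of_nonneg (hkeCoef_nonneg _ _)] using (hasSum_hkeCoef j).summable
    · simpa using hcoef.tsum_eq
  · rw [hke_succ]
    field_simp [norm_pos_iff.1 hz₀]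
    ring
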